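/- Let Q and Q' be d-dimensional strongly blocked lattice-free polytopes in ℝ^d with equal integer hulls, Q_I = Q'_I. Then Q = Q'; that is, a strongly blocked lattice-free polytope is uniquely determined by its integer hull. -/

import Mathlib

open scoped BigOperators

noncomputable section

/-- A point of `ℝ^d` is integral if all its coordinates are integers. -/
def IsIntegralPoint {d : ℕ} (x : Fin d → ℝ) : Prop := ∀ i, ∃ n : ℤ, x i = (n : ℝ)

/-- The set `ℤ^d` of integral points of `ℝ^d`. -/
def latticePts (d : ℕ) : Set (Fin d → ℝ) := {x | IsIntegralPoint x}

/-- A set `K ⊆ ℝ^d` is lattice-free if it is closed, convex, `d`-dimensional (nonempty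
interior) and its interior contains no integral point. -/
def IsLatticeFree {d : ℕ} (K : Set (Fin d → ℝ)) : Prop :=
  IsClosed K ∧ Convex ℝ K ∧ (interior K).Nonempty ∧ interior K ∩ latticePts d = ∅

/-- A set is maximal lattice-free if it is lattice-free and not properly contained in
another lattice-free set. -/
def IsMaxLatticeFree {d : ℕ} (K : Set (Fin d → ℝ)) : Prop :=
  IsLatticeFree K ∧ ∀ K' : Set (Fin d → ℝ), IsLatticeFree K' → K ⊆ K' → K = K'

/-- A polytope is the convex hull of a finite set of points. -/
def IsPolytope {d : ℕ} (P : Set (Fin d → ℝ)) : Prop :=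
  ∃ V : Finset (Fin d → ℝ), P = convexHull ℝ (V : Set (Fin d → ℝ))

/-- A polyhedron is a finite intersection of closed halfspaces. -/
def IsPolyhedron {d : ℕ} (P : Set (Fin d → ℝ)) : Prop :=
  ∃ (n : ℕ) (c : Fin n → (Fin d → ℝ)) (b : Fin n → ℝ),
    P = {x | ∀ j, ∑ i, c j i * x i ≤ b j}

/-- The integer hull of a set: the convex hull of its integral points. -/
def intHull {d : ℕ} (K : Set (Fin d → ℝ)) : Set (Fin d → ℝ) :=
  convexHull ℝ (K ∩ latticePts d)

/-- A polytope is integral if it is the convex hull of its integral points. -/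
def IsIntegralPolytope {d : ℕ} (P : Set (Fin d → ℝ)) : Prop :=
  IsPolytope P ∧ P = intHull P

/-- A facet of a `d`-dimensional closed convex set in `ℝ^d` : a nonempty exposed face of
dimension `d - 1`. -/
def IsFacet {d : ℕ} (P F : Set (Fin d → ℝ)) : Prop :=
  IsExposed ℝ P F ∧ F.Nonempty ∧ Module.finrank ℝ (vectorSpan ℝ F) + 1 = d

/-- A facet is blocked if its relative interior contains an integral point. -/
def IsBlocked {d : ℕ} (F : Set (Fin d → ℝ)) : Prop :=
  ∃ x ∈ intrinsicInterior ℝ F, IsIntegralPoint x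

/-- A facet `F` of a `d`-dimensional lattice-free polyhedron in `ℝ^d` is strongly blocked
if its integer hull is `(d-1)`-dimensional and the relative interior of the integer hull
contains an integral point. -/
def IsStronglyBlockedFacet {d : ℕ} (P F : Set (Fin d → ℝ)) : Prop :=
  IsFacet P F ∧ Module.finrank ℝ (vectorSpan ℝ (intHull F)) + 1 = d ∧
    ∃ x ∈ intrinsicInterior ℝ (intHull F), IsIntegralPoint x

/-- A polyhedron is strongly blocked if all its facets are strongly blocked. -/
def IsStronglyBlocked {d : ℕ} (P : Set (Fin d → ℝ)) : Prop :=
  ∀ F, IsFacet P F → IsStronglyBlockedFacet P F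

/-- Membership in the family `L^d` of weakly maximal integral lattice-free polytopes:
integral lattice-free polytopes not properly contained in another integral
lattice-free polytope. -/
def MemL {d : ℕ} (P : Set (Fin d → ℝ)) : Prop :=
  IsIntegralPolytope P ∧ IsLatticeFree P ∧
    ∀ Q : Set (Fin d → ℝ), IsIntegralPolytope Q → IsLatticeFree Q → P ⊆ Q → P = Q

/-- Membership in the family `M^d` of strongly maximal integral lattice-free polytopes:
integral lattice-free polytopes not properly contained in another lattice-free set. -/
def MemM {d : ℕ} (P : Set (Fin d → ℝ)) : Prop :=
  IsIntegralPolytope P ∧ IsLatticeFree P ∧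
    ∀ K : Set (Fin d → ℝ), IsLatticeFree K → P ⊆ K → P = K

/-- An affine transformation of `ℝ^d` is unimodular if it maps `ℤ^d` onto `ℤ^d`. -/
def IsUnimodular {d : ℕ} (A : (Fin d → ℝ) ≃ᵃ[ℝ] (Fin d → ℝ)) : Prop :=
  A '' latticePts d = latticePts d

/-- The relation on subsets of `ℝ^d` of coinciding up to an affine unimodular
transformation. -/
def UnimodEquiv {d : ℕ} (P Q : Set (Fin d → ℝ)) : Prop :=
  ∃ A : (Fin d → ℝ) ≃ᵃ[ℝ] (Fin d → ℝ), IsUnimodular A ∧ Q = A '' P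

/-- `κ(a) = 1/a₁ + ⋯ + 1/a_d`. -/
def kappa {d : ℕ} (a : Fin d → ℝ) : ℝ := ∑ i, (a i)⁻¹

/-- The axis-aligned simplex `T(a) = conv {0, a₁ e₁, …, a_d e_d}`. -/
def axisSimplex {d : ℕ} (a : Fin d → ℝ) : Set (Fin d → ℝ) :=
  convexHull ℝ (insert 0 (Set.range fun i => a i • (Pi.single i 1 : Fin d → ℝ)))

/-- The map `φ` replacing the last component `t` by `t+1, t(t+1)`. -/
def phiMap {d : ℕ} (a : Fin (d + 1) → ℝ) : Fin (d + 2) → ℝ :=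
  Fin.snoc (Fin.snoc (Fin.init a) (a (Fin.last d) + 1))
    (a (Fin.last d) * (a (Fin.last d) + 1))

/-- The map `ψ` replacing the last component `t` by
`t+3, t(t+1), (t+1)(t+3), (t+1)(t+3)`. -/
def psiMap {d : ℕ} (a : Fin (d + 1) → ℝ) : Fin (d + 4) → ℝ :=
  Fin.snoc (Fin.snoc (Fin.snoc (Fin.snoc (Fin.init a) (a (Fin.last d) + 3))
    (a (Fin.last d) * (a (Fin.last d) + 1)))
    ((a (Fin.last d) + 1) * (a (Fin.last d) + 3)))
    ((a (Fin.last d) + 1) * (a (Fin.last d) + 3))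

/-- The map `ξ` replacing the last component `t` by `(3/2)t, 3t`. -/
def xiMap {d : ℕ} (a : Fin (d + 1) → ℝ) : Fin (d + 2) → ℝ :=
  Fin.snoc (Fin.snoc (Fin.init a) (3 / 2 * a (Fin.last d))) (3 * a (Fin.last d))

/-- The composition `η = ξ ∘ ψ ∘ φ`. -/
def etaMap {d : ℕ} (a : Fin (d + 1) → ℝ) : Fin (d + 6) → ℝ :=
  xiMap (psiMap (phiMap a))

/-- The set `A_d` of representations of `1` as a sum of `d` Egyptian fractions,
with components sorted in ascending order. -/
def EgyptSet (d : ℕ) : Set (Fin d → ℕ) :=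
  {a | (∀ i, 0 < a i) ∧ Monotone a ∧ ∑ i, ((a i : ℝ))⁻¹ = 1}

end

/-!
If `x ∈ Q \ Q'`, some facet `F'` of `Q'` separates `x` from `Q'`. Its integer hull is a
`(d-1)`-dimensional subset of `Q_I = Q'_I ⊆ Q` with an integral point `z` in its relative
interior. The integer hull of a strongly blocked polytope lies in no hyperplane, so `Q` also has
a point strictly on the other side of the hyperplane of `F'`; with points of `Q` on both sides,
`z` is an interior point of `Q`, contradicting lattice-freeness.

Facets separating a point `x` from a full-dimensional polytope are found by tilting a separating
hyperplane about the vertices it touches until these, together with `x`, span the space.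
-/

open Module Filter Topology
open scoped Finset

section ConvexGeometry

variable {E : Type*} [NormedAddCommGroup E] [NormedSpace ℝ E]

theorem vectorSpan_le_ker_of_forall_eq {S : Set E} {f : Dual ℝ E} {b : ℝ}
    (hS : ∀ s ∈ S, f s = b) : vectorSpan ℝ S ≤ LinearMap.ker f := by
  rw [vectorSpan_def, Submodule.span_le]
  rintro _ ⟨p, hp, q, hq, rfl⟩
  simp [hS p hp, hS q hq]

theorem vectorSpan_eq_ker_of_forall_eq [FiniteDimensional ℝ E] {S : Set E} {f : Dual ℝ E}
    {b : ℝ} (hf : f ≠ 0) (hS : ∀ s ∈ S, f s = b)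
    (hdim : finrank ℝ (vectorSpan ℝ S) + 1 = finrank ℝ E) :
    vectorSpan ℝ S = LinearMap.ker f := by
  have hker := Dual.finrank_ker_add_one_of_ne_zero hf
  exact Submodule.eq_of_le_of_finrank_le (vectorSpan_le_ker_of_forall_eq hS) (by omega)

theorem eventually_mem_of_mem_intrinsicInterior {α : Type*} {l : Filter α} {S : Set E} {z : E}
    (hz : z ∈ intrinsicInterior ℝ S) {g : α → E} (hg : Tendsto g l (𝓝 z))
    (hgS : ∀ᶠ a in l, g a ∈ affineSpan ℝ S) : ∀ᶠ a in l, g a ∈ S := by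
  obtain ⟨y, hy, rfl⟩ := mem_intrinsicInterior.1 hz
  obtain ⟨U, hU, hUS⟩ := (mem_nhds_subtype _ _ _).1 (mem_interior_iff_mem_nhds.1 hy)
  filter_upwards [hg hU, hgS] with a hgU hga
  exact hUS (show (⟨g a, hga⟩ : affineSpan ℝ S) ∈ Subtype.val ⁻¹' U from hgU)

/-- Near `z`, a point `w` on the side of `u` is `(1 - t) • p + t • u`, where
`t = (f w - b) / (f u - b)` and `p` is the projection of `w` from `u` onto the hyperplane `f = b`;
`p` stays near `z`, hence in `S`. -/
theorem eventually_mem_of_apply_div_nonneg [FiniteDimensional ℝ E] {Q S : Set E} {f : Dual ℝ E}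
    {b : ℝ} {z u : E}
    (hQ : Convex ℝ Q) (hSQ : S ⊆ Q) (hker : LinearMap.ker f ≤ vectorSpan ℝ S)
    (hz : z ∈ intrinsicInterior ℝ S) (hfz : f z = b) (hu : u ∈ Q) (hub : f u ≠ b) :
    ∀ᶠ w in 𝓝 z, 0 ≤ (f w - b) / (f u - b) → w ∈ Q := by
  set t : E → ℝ := fun w => (f w - b) / (f u - b)
  set p : E → E := fun w => (1 - t w)⁻¹ • (w - t w • u)
  have ht : Continuous t := by
    have := LinearMap.continuous_of_finiteDimensional f
    fun_prop
  have htz : t z = 0 := by simp [t, hfz]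
  have ht_lt : ∀ᶠ w in 𝓝 z, t w < 1 :=
    ht.continuousAt.eventually_lt continuousAt_const (by rw [htz]; exact one_pos)
  have hp : Tendsto p (𝓝 z) (𝓝 z) := by
    have : ContinuousAt p z :=
      ((continuousAt_const.sub ht.continuousAt).inv₀ (by simp [htz])).smul
        (continuousAt_id.sub (ht.continuousAt.smul continuousAt_const))
    simpa [p, htz] using this.tendsto
  have hpS : ∀ᶠ w in 𝓝 z, p w ∈ S := by
    refine eventually_mem_of_mem_intrinsicInterior hz hp ?_
    filter_upwards [ht_lt] with w hw
    have hfp : f (p w - z) = 0 := by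
      have hline : f w - t w * f u = (1 - t w) * b := by
        simp only [t]
        field_simp [sub_ne_zero.2 hub]
        ring
      simp only [p, map_sub, map_smul, smul_eq_mul, hline, hfz]
      field_simp [(by linarith : (1 - t w) ≠ 0)]
      ring
    have hmem := AffineSubspace.vadd_mem_of_mem_direction
      (direction_affineSpan ℝ S ▸ hker hfp) (mem_affineSpan ℝ (intrinsicInterior_subset hz))
    simpa using hmem
  filter_upwards [ht_lt, hpS] with w hw hpw htw
  have hw' : w = (1 - t w) • p w + t w • u := by
    simp only [p, smul_smul, mul_inv_cancel₀ (by linarith : (1 - t w) ≠ 0), one_smul]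
    abel
  rw [hw']
  exact hQ (hSQ hpw) hu (by linarith) htw (by ring)

theorem mem_interior_of_mem_intrinsicInterior [FiniteDimensional ℝ E] {Q S : Set E}
    {f : Dual ℝ E} {b : ℝ} {z x y : E}
    (hQ : Convex ℝ Q) (hSQ : S ⊆ Q) (hker : LinearMap.ker f ≤ vectorSpan ℝ S)
    (hz : z ∈ intrinsicInterior ℝ S) (hfz : f z = b) (hx : x ∈ Q) (hy : y ∈ Q)
    (hxb : b < f x) (hyb : f y < b) : z ∈ interior Q := by
  rw [mem_interior_iff_mem_nhds]
  filter_upwards [eventually_mem_of_apply_div_nonneg hQ hSQ hker hz hfz hx hxb.ne',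
    eventually_mem_of_apply_div_nonneg hQ hSQ hker hz hfz hy hyb.ne] with w hwx hwy
  rcases le_total b (f w) with hw | hw
  · exact hwx (div_nonneg (by linarith) (by linarith))
  · exact hwy (div_nonneg_of_nonpos (by linarith) (by linarith))

def SupportsSeparating (V : Finset E) (x : E) (f : Dual ℝ E) (b : ℝ) : Prop :=
  (∀ v ∈ V, f v ≤ b) ∧ (∃ v ∈ V, f v = b) ∧ b < f x

theorem exists_dual_eq_on_insert_of_vectorSpan_ne_top (V : Finset E) {A : Set E} {x : E}
    (hV : vectorSpan ℝ (V : Set E) = ⊤) (hA : vectorSpan ℝ (insert x A) ≠ ⊤) :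
    ∃ ψ : Dual ℝ E, (∀ a ∈ A, ψ a = ψ x) ∧ ∃ v ∈ V, ψ x < ψ v := by
  obtain ⟨φ, hφ0, hφA⟩ :=
    Submodule.exists_dual_map_eq_bot_of_lt_top (lt_top_iff_ne_top.2 hA) inferInstance
  have hφ : ∀ a ∈ A, φ a = φ x := fun a ha => by
    have hmem : φ (x - a) ∈ (vectorSpan ℝ (insert x A)).map φ :=
      Submodule.mem_map_of_mem (vsub_mem_vectorSpan ℝ (Set.mem_insert x A)
        (Set.mem_insert_of_mem x ha))
    rw [hφA, Submodule.mem_bot, map_sub, sub_eq_zero] at hmem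
    exact hmem.symm
  obtain ⟨v, hv, hvx⟩ : ∃ v ∈ V, φ v ≠ φ x := by
    by_contra! hconst
    have := vectorSpan_le_ker_of_forall_eq (S := (V : Set E)) hconst
    rw [hV, top_le_iff, LinearMap.ker_eq_top] at this
    exact hφ0 this
  rcases hvx.lt_or_gt with hlt | hlt
  · exact ⟨-φ, fun a ha => by simp [hφ a ha], v, hv, by simpa using hlt⟩
  · exact ⟨φ, hφ, v, hv, hlt⟩

/-- Tilt the hyperplane about its touching points, keeping the height of `x` above it, until it
meets a further point of `V`. -/
theorem SupportsSeparating.exists_card_lt {V : Finset E} {x : E} {f : Dual ℝ E} {b : ℝ}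
    (h : SupportsSeparating V x f b) (hV : vectorSpan ℝ (V : Set E) = ⊤)
    (hspan : vectorSpan ℝ (insert x (V.filter (f · = b) : Set E)) ≠ ⊤) :
    ∃ f' b', SupportsSeparating V x f' b' ∧
      #(V.filter (f · = b)) < #(V.filter (f' · = b')) := by
  obtain ⟨hle, -, hbx⟩ := h
  obtain ⟨ψ, hψ, v₁, hv₁, hv₁x⟩ :=
    exists_dual_eq_on_insert_of_vectorSpan_ne_top V hV hspan
  set T := V.filter (ψ x < ψ ·)
  have hT : ∀ v ∈ T, v ∈ V ∧ f v < b ∧ ψ x < ψ v := fun v hv => by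
    obtain ⟨hvV, hvx⟩ := Finset.mem_filter.1 hv
    refine ⟨hvV, (hle v hvV).lt_of_ne fun hvb => ?_, hvx⟩
    exact hvx.ne' (hψ v (by simpa using ⟨hvV, hvb⟩))
  obtain ⟨v₀, hv₀T, hv₀min⟩ := T.exists_min_image (fun v => (b - f v) / (ψ v - ψ x))
    ⟨v₁, Finset.mem_filter.2 ⟨hv₁, hv₁x⟩⟩
  set t := (b - f v₀) / (ψ v₀ - ψ x)
  obtain ⟨hv₀V, hv₀b, hv₀x⟩ := hT v₀ hv₀T
  have ht : 0 < t := div_pos (by linarith) (by linarith)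
  have ht₀ : t * (ψ v₀ - ψ x) = b - f v₀ := div_mul_cancel₀ _ (by linarith)
  have hsub : V.filter (f · = b) ⊆ V.filter ((f + t • ψ) · = b + t * ψ x) := fun v hv => by
    obtain ⟨hvV, hvb⟩ := Finset.mem_filter.1 hv
    refine Finset.mem_filter.2 ⟨hvV, ?_⟩
    simp [hvb, hψ v (by simpa using ⟨hvV, hvb⟩)]
  refine ⟨f + t • ψ, b + t * ψ x, ⟨fun v hv => ?_, ⟨v₀, hv₀V, ?_⟩, ?_⟩,
    Finset.card_lt_card ((Finset.ssubset_iff_of_subset hsub).2 ⟨v₀, ?_, ?_⟩)⟩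
  · by_cases hvT : v ∈ T
    · obtain ⟨-, -, hvx⟩ := hT v hvT
      have : t * (ψ v - ψ x) ≤ b - f v := (le_div_iff₀ (by linarith)).1 (hv₀min v hvT)
      simp only [LinearMap.add_apply, LinearMap.smul_apply, smul_eq_mul]
      linarith
    · have hvx : ψ v ≤ ψ x := not_lt.1 fun hlt => hvT (Finset.mem_filter.2 ⟨hv, hlt⟩)
      simp only [LinearMap.add_apply, LinearMap.smul_apply, smul_eq_mul]
      nlinarith [hle v hv]
  · simp only [LinearMap.add_apply, LinearMap.smul_apply, smul_eq_mul]
    linarith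
  · simp only [LinearMap.add_apply, LinearMap.smul_apply, smul_eq_mul]
    linarith
  · simp only [Finset.mem_filter, LinearMap.add_apply, LinearMap.smul_apply, smul_eq_mul]
    exact ⟨hv₀V, by linarith⟩
  · simp only [Finset.mem_filter, not_and]
    exact fun _ => hv₀b.ne

theorem exists_supportsSeparating_vectorSpan_eq_top {V : Finset E} {x : E}
    (hV : affineSpan ℝ (V : Set E) = ⊤) (hx : x ∉ convexHull ℝ (V : Set E)) :
    ∃ f b, SupportsSeparating V x f b ∧
      vectorSpan ℝ (insert x (V.filter (f · = b) : Set E)) = ⊤ := by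
  have hVspan : vectorSpan ℝ (V : Set E) = ⊤ := by
    rw [← direction_affineSpan, hV, AffineSubspace.direction_top]
  have hVne : V.Nonempty := by
    refine Finset.coe_nonempty.1 ((affineSpan_nonempty (k := ℝ)).1 ?_)
    simp [hV]
  by_contra! hnone
  have hgrow :
      ∀ n : ℕ, ∃ f b, SupportsSeparating V x f b ∧ n ≤ #(V.filter (f · = b)) := by
    intro n
    induction n with
    | zero =>
      obtain ⟨g, u, hgV, hgx⟩ := geometric_hahn_banach_closed_point (convex_convexHull ℝ _)
        (V.finite_toSet.isCompact_convexHull (𝕜 := ℝ)).isClosed hx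
      obtain ⟨v, hv, hvmax⟩ := V.exists_max_image (fun v => g v) hVne
      exact ⟨g, g v, ⟨hvmax, ⟨v, hv, rfl⟩,
        (hgV v (subset_convexHull ℝ _ hv)).trans hgx⟩, Nat.zero_le _⟩
    | succ n ih =>
      obtain ⟨f, b, hsep, hn⟩ := ih
      obtain ⟨f', b', hsep', hlt⟩ := hsep.exists_card_lt hVspan (hnone f b hsep)
      exact ⟨f', b', hsep', by omega⟩
  obtain ⟨f, b, -, hcard⟩ := hgrow (#V + 1)
  have := Finset.card_filter_le V (f · = b)
  omega

theorem isExposed_setOf_apply_eq [FiniteDimensional ℝ E] {A : Set E} {f : Dual ℝ E}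
    {b : ℝ}
    (hA : ∀ y ∈ A, f y ≤ b) : IsExposed ℝ A {y ∈ A | f y = b} := by
  rintro ⟨a, ha, hfa⟩
  refine ⟨LinearMap.toContinuousLinearMap f, Set.ext fun y => ⟨?_, ?_⟩⟩
  · rintro ⟨hy, hfy⟩
    exact ⟨hy, fun z hz => by simpa [hfy] using hA z hz⟩
  · rintro ⟨hy, hmax⟩
    exact ⟨hy, (hA y hy).antisymm (by simpa [hfa] using hmax a ha)⟩

theorem finrank_vectorSpan_add_one_of_insert_eq_top [FiniteDimensional ℝ E]
    {F : Set E} {f : Dual ℝ E} {b : ℝ} {x : E} (hf : f ≠ 0) (hF : ∀ y ∈ F, f y = b)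
    (hspan : vectorSpan ℝ (insert x F) = ⊤) :
    finrank ℝ (vectorSpan ℝ F) + 1 = finrank ℝ E := by
  have hle := Submodule.finrank_mono (vectorSpan_le_ker_of_forall_eq hF)
  have hker := Dual.finrank_ker_add_one_of_ne_zero hf
  have hge := finrank_vectorSpan_insert_le_set ℝ F x
  rw [hspan, finrank_top] at hge
  omega

theorem Bornology.IsBounded.exists_add_smul_notMem {s : Set E} (hs : Bornology.IsBounded s)
    (p : E) {u : E} (hu : u ≠ 0) :
    ∃ M : ℝ, 0 ≤ M ∧ p + M • u ∉ s := by
  obtain ⟨R, hR⟩ := hs.exists_norm_le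
  have hu' : 0 < ‖u‖ := norm_pos_iff.2 hu
  refine ⟨(|R| + ‖p‖ + 1) / ‖u‖, by positivity, fun hmem => ?_⟩
  have hnorm : ‖((|R| + ‖p‖ + 1) / ‖u‖) • u‖ = |R| + ‖p‖ + 1 := by
    rw [norm_smul, Real.norm_of_nonneg (by positivity), div_mul_cancel₀ _ hu'.ne']
  have := norm_sub_le (p + ((|R| + ‖p‖ + 1) / ‖u‖) • u) p
  rw [add_sub_cancel_left, hnorm] at this
  linarith [hR _ hmem, le_abs_self R]

theorem exists_mem_apply_ne_of_interior_nonempty {s : Set E} (hs : (interior s).Nonempty)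
    {f : Dual ℝ E} (hf : f ≠ 0) (b : ℝ) : ∃ p ∈ s, f p ≠ b := by
  by_contra! hsb
  have hspan : affineSpan ℝ s = ⊤ :=
    affineSpan_eq_top_of_nonempty_interior (hs.mono (interior_mono (subset_convexHull ℝ s)))
  have := vectorSpan_le_ker_of_forall_eq hsb
  rw [← direction_affineSpan, hspan, AffineSubspace.direction_top, top_le_iff,
    LinearMap.ker_eq_top] at this
  exact hf this

end ConvexGeometry

section IntegerHull

variable {d : ℕ}

theorem intHull_subset {K : Set (Fin d → ℝ)} (hK : Convex ℝ K) : intHull K ⊆ K :=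
  convexHull_min Set.inter_subset_left hK

theorem intHull_mono {K L : Set (Fin d → ℝ)} (h : K ⊆ L) : intHull K ⊆ intHull L :=
  convexHull_mono (Set.inter_subset_inter_left _ h)

theorem IsPolytope.convex {P : Set (Fin d → ℝ)} (hP : IsPolytope P) : Convex ℝ P := by
  obtain ⟨V, rfl⟩ := hP
  exact convex_convexHull ℝ _

theorem IsPolytope.isBounded {P : Set (Fin d → ℝ)} (hP : IsPolytope P) :
    Bornology.IsBounded P := by
  obtain ⟨V, rfl⟩ := hP
  exact (V.finite_toSet.isCompact_convexHull (𝕜 := ℝ)).isBounded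

theorem IsPolytope.exists_isFacet_separating {P : Set (Fin d → ℝ)} (hP : IsPolytope P)
    (hint : (interior P).Nonempty) {x : Fin d → ℝ} (hx : x ∉ P) :
    ∃ (f : Dual ℝ (Fin d → ℝ)) (b : ℝ),
      f ≠ 0 ∧ (∀ y ∈ P, f y ≤ b) ∧ b < f x ∧ IsFacet P {y ∈ P | f y = b} := by
  obtain ⟨V, rfl⟩ := hP
  obtain ⟨f, b, ⟨hle, ⟨v, hv, hvb⟩, hbx⟩, hspan⟩ :=
    exists_supportsSeparating_vectorSpan_eq_top (affineSpan_eq_top_of_nonempty_interior hint) hx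
  have hPb : ∀ y ∈ convexHull ℝ (V : Set (Fin d → ℝ)), f y ≤ b :=
    fun y hy => convexHull_min hle (convex_halfSpace_le f.isLinear b) hy
  have hf : f ≠ 0 := by
    rintro rfl
    simp only [LinearMap.zero_apply] at hvb hbx
    linarith
  set F := {y ∈ convexHull ℝ (V : Set (Fin d → ℝ)) | f y = b}
  have hspan' : vectorSpan ℝ (insert x F) = ⊤ :=
    top_unique (hspan ▸ vectorSpan_mono ℝ (Set.insert_subset_insert fun w hw => by
      obtain ⟨hwV, hwb⟩ := Finset.mem_filter.1 hw
      exact ⟨subset_convexHull ℝ _ hwV, hwb⟩))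
  refine ⟨f, b, hf, hPb, hbx, isExposed_setOf_apply_eq hPb,
    ⟨v, subset_convexHull ℝ _ hv, hvb⟩, ?_⟩
  simpa using finrank_vectorSpan_add_one_of_insert_eq_top hf (fun y hy => hy.2) hspan'

/-- If `P_I` lay in a hyperplane `H`, the facet of `P` cutting off a far point `w` beyond some
`p ∈ P \ H` would have its `(d-1)`-dimensional integer hull in `H`, so its hyperplane would be
`H`; but `p` and `w` lie on the same side of `H`. -/
theorem IsStronglyBlocked.exists_mem_intHull_apply_ne {P : Set (Fin d → ℝ)}
    (hP : IsPolytope P) (hint : (interior P).Nonempty) (hsb : IsStronglyBlocked P)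
    {f : Dual ℝ (Fin d → ℝ)} (hf : f ≠ 0) (b : ℝ) : ∃ y ∈ intHull P, f y ≠ b := by
  by_contra! hHP
  obtain ⟨p, hp, hpb⟩ := exists_mem_apply_ne_of_interior_nonempty hint hf b
  obtain ⟨u, hu⟩ := LinearMap.surjective hf (f p - b)
  obtain ⟨M, hM, hw⟩ := hP.isBounded.exists_add_smul_notMem p (u := u) fun hu0 => by
    rw [hu0, map_zero] at hu
    exact hpb (by linarith)
  obtain ⟨g, β, -, hgP, hβw, hG⟩ := hP.exists_isFacet_separating hint hw
  obtain ⟨-, hdim, z, hz, -⟩ := hsb _ hG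
  have hzG := intrinsicInterior_subset hz
  have hGP : {y ∈ P | g y = β} ⊆ P := fun y hy => hy.1
  have hGβ : ∀ y ∈ intHull {y ∈ P | g y = β}, g y = β := fun y hy =>
    (intHull_subset (hP.convex.inter (convex_hyperplane g.isLinear β)) hy).2
  have hGb : ∀ y ∈ intHull {y ∈ P | g y = β}, f y = b :=
    fun y hy => hHP y (intHull_mono hGP hy)
  have hker : LinearMap.ker f ≤ LinearMap.ker g := by
    rw [← vectorSpan_eq_ker_of_forall_eq hf hGb (by simpa using hdim)]
    exact vectorSpan_le_ker_of_forall_eq hGβ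
  have hv : (p + M • u - z) - (1 + M) • (p - z) ∈ LinearMap.ker f := by
    simp only [LinearMap.mem_ker, map_sub, map_add, map_smul, smul_eq_mul, hu, hGb z hzG]
    ring
  have hgv := LinearMap.mem_ker.1 (hker hv)
  simp only [map_sub, map_add, map_smul, smul_eq_mul, hGβ z hzG] at hgv hβw
  nlinarith [mul_nonneg (by linarith : 0 ≤ 1 + M) (sub_nonneg.2 (hgP p hp))]

theorem subset_of_intHull_eq {Q Q' : Set (Fin d → ℝ)}
    (hQpoly : IsPolytope Q) (hQlf : IsLatticeFree Q) (hQsb : IsStronglyBlocked Q)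
    (hQ'poly : IsPolytope Q') (hQ'lf : IsLatticeFree Q') (hQ'sb : IsStronglyBlocked Q')
    (h : intHull Q = intHull Q') : Q ⊆ Q' := by
  obtain ⟨-, -, hQint, hQfree⟩ := hQlf
  intro x hxQ
  by_contra hxQ'
  obtain ⟨f, b, hf, hQ'b, hbx, hF⟩ := hQ'poly.exists_isFacet_separating hQ'lf.2.2.1 hxQ'
  obtain ⟨-, hdim, z, hz, hzint⟩ := hQ'sb _ hF
  set S := intHull {y ∈ Q' | f y = b}
  have hSb : ∀ y ∈ S, f y = b := fun y hy =>
    (intHull_subset (hQ'poly.convex.inter (convex_hyperplane f.isLinear b)) hy).2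
  have hSQ : S ⊆ Q := fun y hy =>
    intHull_subset hQpoly.convex (h ▸ intHull_mono (fun w hw => hw.1) hy)
  obtain ⟨y, hy, hyb⟩ := hQsb.exists_mem_intHull_apply_ne hQpoly hQint hf b
  have hyb' : f y < b := (hQ'b y (intHull_subset hQ'poly.convex (h ▸ hy))).lt_of_ne hyb
  have hzQ : z ∈ interior Q :=
    mem_interior_of_mem_intrinsicInterior hQpoly.convex hSQ
      (vectorSpan_eq_ker_of_forall_eq hf hSb (by simpa using hdim)).ge hz
      (hSb z (intrinsicInterior_subset hz)) hxQ (intHull_subset hQpoly.convex hy) hbx hyb'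
  exact (Set.eq_empty_iff_forall_notMem.1 hQfree) z ⟨hzQ, hzint⟩

end IntegerHull

/-- a strongly blocked lattice-free polytope is uniquely determined by its
integer hull. -/
theorem statement10 {d : ℕ} (Q Q' : Set (Fin d → ℝ))
    (hQpoly : IsPolytope Q) (hQlf : IsLatticeFree Q) (hQsb : IsStronglyBlocked Q)
    (hQ'poly : IsPolytope Q') (hQ'lf : IsLatticeFree Q') (hQ'sb : IsStronglyBlocked Q')
    (h : intHull Q = intHull Q') :
    Q = Q' :=
  (subset_of_intHull_eq hQpoly hQlf hQsb hQ'poly hQ'lf hQ'sb h).antisymm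
    (subset_of_intHull_eq hQ'poly hQ'lf hQ'sb hQpoly hQlf hQsb h.symm)
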